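/- For all x₁, x₂ ∈ ℝ, the uniform correlation mixture of bivariate standard Gaussian densities satisfies ∫_{−1}^{1} (1/(4π√(1−ρ²))) · exp(−(x₁² + x₂² − 2ρ x₁x₂)/(2(1−ρ²))) dρ = (1/2)·(1 − Φ(max(|x₁|, |x₂|))). -/

import Mathlib

/-!
Let `Φ₂(ρ; x, y) = P(X ≤ x, Y ≤ y)` for standard normals `X, Y` with correlation `ρ`, computed by
conditioning on `X`. Plackett's identity `∂Φ₂/∂ρ = f_ρ(x, y)` (the bivariate density) holds because
the `ρ`-derivative of the conditional integrand is the `s`-derivative of `f_ρ(s, y)`, so the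
integral over `s ≤ x` telescopes. Integrating over `ρ ∈ (-1, 1)` therefore gives
`Φ₂(1⁻) - Φ₂(-1⁺) = P(X ≤ min x y) - P(-y < X ≤ x)`, and by the symmetry `Φ(-t) = 1 - Φ(t)` this is
`1 - Φ(max |x| |y|)`. The integrand of the theorem is `f_ρ(x₁, x₂) / 2`.
-/

open MeasureTheory Real Set

/-- Standard normal cumulative distribution function. -/
noncomputable def stdNormalCdf (x : ℝ) : ℝ :=
  ∫ t in Iic x, (1 / Real.sqrt (2 * π)) * Real.exp (-t ^ 2 / 2)

open Filter Topology ProbabilityTheory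

local notation "φ" => gaussianPDFReal 0 1

lemma gaussianPDFReal_zero_one (t : ℝ) : φ t = (√(2 * π))⁻¹ * exp (-t ^ 2 / 2) := by
  simp [gaussianPDFReal]

@[fun_prop]
lemma continuous_gaussianPDFReal_zero_one : Continuous φ := by
  simp only [funext gaussianPDFReal_zero_one]
  fun_prop

lemma stdNormalCdf_eq_integral (x : ℝ) : stdNormalCdf x = ∫ t in Iic x, φ t := by
  simp only [stdNormalCdf, gaussianPDFReal_zero_one, one_div]

lemma stdNormalCdf_eq_cdf : stdNormalCdf = cdf (gaussianReal 0 1) := by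
  ext x
  rw [cdf_eq_real, measureReal_def, gaussianReal_apply_eq_integral _ one_ne_zero,
    ENNReal.toReal_ofReal (setIntegral_nonneg measurableSet_Iic
      fun t _ ↦ gaussianPDFReal_nonneg 0 1 t), stdNormalCdf_eq_integral]

lemma hasDerivAt_stdNormalCdf (x : ℝ) : HasDerivAt stdNormalCdf (φ x) x := by
  have hint (a : ℝ) : IntegrableOn φ (Iic a) := (integrable_gaussianPDFReal 0 1).integrableOn
  have hsplit : stdNormalCdf = fun z ↦ stdNormalCdf 0 + ∫ t in (0 : ℝ)..z, φ t := by
    ext z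
    rw [stdNormalCdf_eq_integral, stdNormalCdf_eq_integral,
      ← intervalIntegral.integral_Iic_sub_Iic (hint 0) (hint z), add_sub_cancel]
  rw [hsplit]
  exact (intervalIntegral.integral_hasDerivAt_right
    (integrable_gaussianPDFReal 0 1).intervalIntegrable
    (continuous_gaussianPDFReal_zero_one.aestronglyMeasurable.stronglyMeasurableAtFilter)
    continuous_gaussianPDFReal_zero_one.continuousAt).const_add _

lemma stdNormalCdf_neg (x : ℝ) : stdNormalCdf (-x) = 1 - stdNormalCdf x := by
  have heven (t : ℝ) : φ (-t) = φ t := by simp [gaussianPDFReal_zero_one]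
  have hint := (integrable_gaussianPDFReal 0 1).integrableOn (s := Iic x)
  have htotal := intervalIntegral.integral_Iic_add_Ioi hint
    (integrable_gaussianPDFReal 0 1).integrableOn
  rw [integral_gaussianPDFReal_eq_one 0 one_ne_zero] at htotal
  rw [stdNormalCdf_eq_integral, stdNormalCdf_eq_integral, ← htotal, add_sub_cancel_left,
    ← integral_comp_neg_Ioi]
  simp only [heven]

noncomputable def bivariateStdNormalPDF (ρ x y : ℝ) : ℝ :=
  (2 * π * √(1 - ρ ^ 2))⁻¹ * exp (-(x ^ 2 + y ^ 2 - 2 * ρ * x * y) / (2 * (1 - ρ ^ 2)))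

lemma one_sub_sq_pos_of_abs_lt_one {ρ : ℝ} (hρ : |ρ| < 1) : 0 < 1 - ρ ^ 2 := by
  rw [sub_pos, sq_lt_one_iff_abs_lt_one]
  exact hρ

lemma bivariateStdNormalPDF_nonneg (ρ x y : ℝ) : 0 ≤ bivariateStdNormalPDF ρ x y := by
  unfold bivariateStdNormalPDF
  positivity

lemma bivariateStdNormalPDF_eq_gaussianPDFReal_mul {ρ : ℝ} (hρ : |ρ| < 1) (x y : ℝ) :
    bivariateStdNormalPDF ρ x y = φ x * φ ((y - ρ * x) / √(1 - ρ ^ 2)) / √(1 - ρ ^ 2) := by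
  have hpos := one_sub_sq_pos_of_abs_lt_one hρ
  have hsqrt : 0 < √(1 - ρ ^ 2) := sqrt_pos.2 hpos
  simp only [bivariateStdNormalPDF, gaussianPDFReal_zero_one, div_pow, sq_sqrt hpos.le]
  rw [mul_mul_mul_comm, ← exp_add, ← mul_inv, mul_self_sqrt (by positivity)]
  field_simp
  congr 1
  ring

lemma bivariateStdNormalPDF_le {ρ : ℝ} (hρ : |ρ| < 1) (x y : ℝ) :
    bivariateStdNormalPDF ρ x y ≤ (2 * π * √(1 - ρ ^ 2))⁻¹ * exp (-x ^ 2 / 2) := by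
  have hpos := one_sub_sq_pos_of_abs_lt_one hρ
  unfold bivariateStdNormalPDF
  gcongr _ * exp ?_
  rw [div_le_div_iff₀ (by positivity) (by norm_num)]
  nlinarith [sq_nonneg (y - ρ * x)]

lemma hasDerivAt_bivariateStdNormalPDF_fst (ρ x y : ℝ) :
    HasDerivAt (fun s ↦ bivariateStdNormalPDF ρ s y)
      (bivariateStdNormalPDF ρ x y * ((ρ * y - x) / (1 - ρ ^ 2))) x := by
  have hquad : HasDerivAt (fun s ↦ -(s ^ 2 + y ^ 2 - 2 * ρ * s * y) / (2 * (1 - ρ ^ 2)))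
      ((ρ * y - x) / (1 - ρ ^ 2)) x := by
    have h := (((hasDerivAt_pow 2 x).add_const (y ^ 2)).sub
      (((hasDerivAt_id x).const_mul (2 * ρ)).mul_const y)).neg.div_const (2 * (1 - ρ ^ 2))
    refine h.congr_deriv ?_ |>.congr_of_eventuallyEq (.of_forall fun s ↦ ?_)
    · generalize 1 - ρ ^ 2 = c
      norm_num
      ring
    · simp
  unfold bivariateStdNormalPDF
  exact (hquad.exp.const_mul _).congr_deriv (mul_assoc _ _ _).symm

lemma tendsto_bivariateStdNormalPDF_atBot {ρ : ℝ} (hρ : |ρ| < 1) (y : ℝ) :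
    Tendsto (fun s ↦ bivariateStdNormalPDF ρ s y) atBot (𝓝 0) := by
  have hexp : Tendsto (fun s : ℝ ↦ exp (-s ^ 2 / 2)) atBot (𝓝 0) := by
    refine tendsto_exp_atBot.comp ?_
    simp only [neg_div]
    have hsq := (tendsto_pow_atTop (α := ℝ) two_ne_zero).comp tendsto_neg_atBot_atTop
    simp only [Function.comp_def, neg_sq] at hsq
    exact tendsto_neg_atTop_atBot.comp (hsq.atTop_div_const two_pos)
  have hbound := hexp.const_mul (2 * π * √(1 - ρ ^ 2))⁻¹
  rw [mul_zero] at hbound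
  exact tendsto_of_tendsto_of_tendsto_of_le_of_le tendsto_const_nhds hbound
    (bivariateStdNormalPDF_nonneg ρ · y) (bivariateStdNormalPDF_le hρ · y)

lemma abs_bivariateStdNormalPDF_mul_le {ρ δ : ℝ} (hδ : 0 < δ) (hδρ : δ ≤ 1 - ρ ^ 2) (x y : ℝ) :
    |bivariateStdNormalPDF ρ x y * ((ρ * y - x) / (1 - ρ ^ 2))| ≤
      (2 * π * √δ * δ)⁻¹ * ((|y| + |x|) * exp (-x ^ 2 / 2)) := by
  have hpos : 0 < 1 - ρ ^ 2 := hδ.trans_le hδρ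
  have hρ : |ρ| < 1 := by rwa [← sq_lt_one_iff_abs_lt_one, ← sub_pos]
  have hpdf : bivariateStdNormalPDF ρ x y ≤ (2 * π * √δ)⁻¹ * exp (-x ^ 2 / 2) :=
    (bivariateStdNormalPDF_le hρ x y).trans (by gcongr)
  have hnum : |ρ * y - x| ≤ |y| + |x| := by
    calc |ρ * y - x| ≤ |ρ| * |y| + |x| := by rw [← abs_mul]; exact abs_sub _ _
      _ ≤ |y| + |x| := by gcongr; nlinarith [abs_nonneg y]
  calc |bivariateStdNormalPDF ρ x y * ((ρ * y - x) / (1 - ρ ^ 2))|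
      = bivariateStdNormalPDF ρ x y * (|ρ * y - x| / (1 - ρ ^ 2)) := by
        rw [abs_mul, abs_div, abs_of_nonneg (bivariateStdNormalPDF_nonneg ρ x y),
          abs_of_pos hpos]
    _ ≤ (2 * π * √δ)⁻¹ * exp (-x ^ 2 / 2) * ((|y| + |x|) / δ) := by gcongr
    _ = (2 * π * √δ * δ)⁻¹ * ((|y| + |x|) * exp (-x ^ 2 / 2)) := by ring

lemma integrable_abs_add_abs_mul_exp_neg_sq_div_two (c : ℝ) :
    Integrable fun s : ℝ ↦ (|c| + |s|) * exp (-s ^ 2 / 2) := by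
  have hexp : Integrable fun s : ℝ ↦ exp (-s ^ 2 / 2) := by
    simpa [neg_div, div_eq_inv_mul] using integrable_exp_neg_mul_sq (b := 1 / 2) (by norm_num)
  have hmoment : Integrable fun s : ℝ ↦ |s| * exp (-s ^ 2 / 2) := by
    have h := integrable_rpow_mul_exp_neg_mul_sq (b := 1 / 2) (s := 1) (by norm_num) (by norm_num)
    simpa [neg_div, div_eq_inv_mul, abs_mul, abs_of_pos (exp_pos _)] using h.abs
  simp only [add_mul]
  exact (hexp.const_mul |c|).add hmoment

lemma integral_Iic_bivariateStdNormalPDF_mul {ρ : ℝ} (hρ : |ρ| < 1) (x y : ℝ) :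
    ∫ s in Iic x, bivariateStdNormalPDF ρ s y * ((ρ * y - s) / (1 - ρ ^ 2)) =
      bivariateStdNormalPDF ρ x y := by
  have hpos := one_sub_sq_pos_of_abs_lt_one hρ
  have hint : Integrable fun s ↦ bivariateStdNormalPDF ρ s y * ((ρ * y - s) / (1 - ρ ^ 2)) :=
    ((integrable_abs_add_abs_mul_exp_neg_sq_div_two y).const_mul _).mono'
      (by unfold bivariateStdNormalPDF; fun_prop)
      (.of_forall fun s ↦ abs_bivariateStdNormalPDF_mul_le hpos le_rfl s y)
  rw [integral_Iic_of_hasDerivAt_of_tendsto' (fun s _ ↦ hasDerivAt_bivariateStdNormalPDF_fst ρ s y)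
    hint.integrableOn (tendsto_bivariateStdNormalPDF_atBot hρ y), sub_zero]

@[fun_prop]
lemma continuous_stdNormalCdf : Continuous stdNormalCdf :=
  continuous_iff_continuousAt.2 fun x ↦ (hasDerivAt_stdNormalCdf x).continuousAt

lemma norm_gaussianPDFReal_mul_stdNormalCdf_le (s t : ℝ) : ‖φ s * stdNormalCdf t‖ ≤ φ s := by
  rw [stdNormalCdf_eq_cdf, norm_mul, Real.norm_of_nonneg (gaussianPDFReal_nonneg 0 1 s),
    Real.norm_of_nonneg (cdf_nonneg _ t)]
  exact mul_le_of_le_one_right (gaussianPDFReal_nonneg 0 1 s) (cdf_le_one _ t)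

/-- `P(X ≤ x, Y ≤ y)` for standard normals with correlation `ρ`, conditioning on `X = s`:
then `Y` is normal with mean `ρ s` and variance `1 - ρ²`. -/
noncomputable def bivariateStdNormalCdf (ρ x y : ℝ) : ℝ :=
  ∫ s in Iic x, φ s * stdNormalCdf ((y - ρ * s) / √(1 - ρ ^ 2))

lemma hasDerivAt_gaussianPDFReal_mul_stdNormalCdf {ρ : ℝ} (hρ : |ρ| < 1) (s y : ℝ) :
    HasDerivAt (fun r ↦ φ s * stdNormalCdf ((y - r * s) / √(1 - r ^ 2)))
      (bivariateStdNormalPDF ρ s y * ((ρ * y - s) / (1 - ρ ^ 2))) ρ := by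
  have hpos := one_sub_sq_pos_of_abs_lt_one hρ
  have hsqrt : 0 < √(1 - ρ ^ 2) := sqrt_pos.2 hpos
  have hden : HasDerivAt (fun r ↦ √(1 - r ^ 2)) (-ρ / √(1 - ρ ^ 2)) ρ := by
    have h := ((hasDerivAt_pow 2 ρ).const_sub 1).sqrt hpos.ne'
    refine h.congr_deriv ?_
    norm_num
    field_simp
  have hu : HasDerivAt (fun r ↦ (y - r * s) / √(1 - r ^ 2))
      ((ρ * y - s) / ((1 - ρ ^ 2) * √(1 - ρ ^ 2))) ρ := by
    refine (((hasDerivAt_mul_const s).const_sub y).div hden hsqrt.ne').congr_deriv ?_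
    field_simp
    rw [sq_sqrt hpos.le]
    ring
  refine (((hasDerivAt_stdNormalCdf _).comp ρ hu).const_mul (φ s)).congr_deriv ?_
  rw [bivariateStdNormalPDF_eq_gaussianPDFReal_mul hρ]
  field_simp

lemma hasDerivAt_bivariateStdNormalCdf {ρ : ℝ} (hρ : |ρ| < 1) (x y : ℝ) :
    HasDerivAt (fun r ↦ bivariateStdNormalCdf r x y) (bivariateStdNormalPDF ρ x y) ρ := by
  set r₀ := (1 + |ρ|) / 2
  have hr₀ : r₀ < 1 := by simp only [r₀]; linarith
  have hδ : 0 < 1 - r₀ ^ 2 := by nlinarith [show 0 ≤ r₀ by positivity]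
  have hball : ∀ r ∈ Metric.ball ρ ((1 - |ρ|) / 2), |r| < r₀ := fun r hr ↦ by
    have := abs_sub_abs_le_abs_sub r ρ
    rw [Metric.mem_ball, dist_eq] at hr
    simp only [r₀]; linarith
  have hδr : ∀ r ∈ Metric.ball ρ ((1 - |ρ|) / 2), 1 - r₀ ^ 2 ≤ 1 - r ^ 2 := fun r hr ↦ by
    have := hball r hr
    nlinarith [abs_nonneg r, sq_abs r]
  have hderiv := hasDerivAt_integral_of_dominated_loc_of_deriv_le (μ := volume.restrict (Iic x))
    (F' := fun r s ↦ bivariateStdNormalPDF r s y * ((r * y - s) / (1 - r ^ 2)))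
    (Metric.ball_mem_nhds ρ (by linarith)) (.of_forall fun r ↦ by fun_prop)
    ((integrable_gaussianPDFReal 0 1).restrict.mono' (by fun_prop)
      (.of_forall fun s ↦ norm_gaussianPDFReal_mul_stdNormalCdf_le s _))
    (by unfold bivariateStdNormalPDF; fun_prop)
    (.of_forall fun s r hr ↦ abs_bivariateStdNormalPDF_mul_le hδ (hδr r hr) s y)
    ((integrable_abs_add_abs_mul_exp_neg_sq_div_two y).const_mul _).restrict
    (.of_forall fun s r hr ↦ hasDerivAt_gaussianPDFReal_mul_stdNormalCdf
      ((hball r hr).trans hr₀) s y)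
  have h := hderiv.2
  rw [integral_Iic_bivariateStdNormalPDF_mul hρ] at h
  exact h

lemma integrableOn_bivariateStdNormalPDF_corr (x y : ℝ) :
    IntegrableOn (fun ρ ↦ bivariateStdNormalPDF ρ x y) (Ioc (-1) 1) := by
  have hinvSqrt : IntegrableOn (fun ρ : ℝ ↦ 1 / √(1 - ρ ^ 2)) (Ioc (-1) 1) :=
    intervalIntegral.integrableOn_deriv_of_nonneg continuous_arcsin.continuousOn
      (fun ρ hρ ↦ hasDerivAt_arcsin hρ.1.ne' hρ.2.ne) (fun ρ _ ↦ by positivity)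
  rw [integrableOn_Ioc_iff_integrableOn_Ioo]
  refine ((hinvSqrt.mono_set Ioo_subset_Ioc_self).const_mul (2 * π)⁻¹).mono'
    (by unfold bivariateStdNormalPDF; fun_prop) ?_
  filter_upwards [ae_restrict_mem measurableSet_Ioo] with ρ hρ
  rw [Real.norm_of_nonneg (bivariateStdNormalPDF_nonneg ρ x y)]
  calc bivariateStdNormalPDF ρ x y ≤ (2 * π * √(1 - ρ ^ 2))⁻¹ * exp (-x ^ 2 / 2) :=
        bivariateStdNormalPDF_le (abs_lt.2 hρ) x y
    _ ≤ (2 * π * √(1 - ρ ^ 2))⁻¹ * 1 := by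
        gcongr
        exact exp_le_one_iff.2 (by nlinarith [sq_nonneg x])
    _ = (2 * π)⁻¹ * (1 / √(1 - ρ ^ 2)) := by ring

lemma tendsto_sqrt_one_sub_sq {c : ℝ} (hc : c ^ 2 = 1) :
    Tendsto (fun r ↦ √(1 - r ^ 2)) (𝓝[Ioo (-1) 1] c) (𝓝[>] 0) := by
  refine tendsto_nhdsWithin_iff.2 ⟨?_, eventually_nhdsWithin_of_forall fun r hr ↦
    sqrt_pos.2 (one_sub_sq_pos_of_abs_lt_one (abs_lt.2 hr))⟩
  simpa [hc] using ((by fun_prop : Continuous fun r : ℝ ↦ √(1 - r ^ 2)).tendsto c).mono_left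
    nhdsWithin_le_nhds

lemma tendsto_stdNormalCdf_div {α : Type*} {l : Filter α} {f g : α → ℝ} {L : ℝ} (hL : L ≠ 0)
    (hf : Tendsto f l (𝓝 L)) (hg : Tendsto g l (𝓝[>] 0)) :
    Tendsto (fun a ↦ stdNormalCdf (f a / g a)) l (𝓝 (if 0 < L then 1 else 0)) := by
  have hinv : Tendsto (fun a ↦ (g a)⁻¹) l atTop := tendsto_inv_nhdsGT_zero.comp hg
  simp only [div_eq_mul_inv, stdNormalCdf_eq_cdf]
  rcases hL.lt_or_gt with hneg | hpos
  · rw [if_neg hneg.not_gt]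
    exact (tendsto_cdf_atBot _).comp (hf.neg_mul_atTop hneg hinv)
  · rw [if_pos hpos]
    exact (tendsto_cdf_atTop _).comp (hf.pos_mul_atTop hpos hinv)

lemma tendsto_bivariateStdNormalCdf {l : Filter ℝ} [l.IsCountablyGenerated] {c : ℝ}
    (hc : c ≠ 0) (hl : l ≤ 𝓝 c) (hsqrt : Tendsto (fun r ↦ √(1 - r ^ 2)) l (𝓝[>] 0))
    (x y : ℝ) :
    Tendsto (fun r ↦ bivariateStdNormalCdf r x y) l
      (𝓝 (∫ s in Iic x ∩ {s | c * s < y}, φ s)) := by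
  rw [← setIntegral_indicator (measurableSet_lt (by fun_prop) measurable_const)]
  refine tendsto_integral_filter_of_dominated_convergence φ (.of_forall fun r ↦ by fun_prop)
    (.of_forall fun r ↦ .of_forall fun s ↦ norm_gaussianPDFReal_mul_stdNormalCdf_le s _)
    (integrable_gaussianPDFReal 0 1).restrict ?_
  filter_upwards [ae_restrict_of_ae (compl_mem_ae_iff.2 (measure_singleton (y / c)))]
    with s (hs : s ≠ y / c)
  have hne : y - c * s ≠ 0 := fun h ↦ hs (by field_simp; linarith)
  have hnum : Tendsto (fun r ↦ y - r * s) l (𝓝 (y - c * s)) :=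
    ((by fun_prop : Continuous fun r : ℝ ↦ y - r * s).tendsto c).mono_left hl
  convert (tendsto_stdNormalCdf_div hne hnum hsqrt).const_mul (φ s) using 2
  simp [indicator_apply, sub_pos]

lemma tendsto_bivariateStdNormalCdf_one (x y : ℝ) :
    Tendsto (fun r ↦ bivariateStdNormalCdf r x y) (𝓝[<] 1) (𝓝 (stdNormalCdf (min x y))) := by
  have h := tendsto_bivariateStdNormalCdf one_ne_zero nhdsWithin_le_nhds
    (nhdsWithin_Ioo_eq_nhdsLT (by norm_num : (-1 : ℝ) < 1) ▸ tendsto_sqrt_one_sub_sq (one_pow 2)) x y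
  simp only [one_mul] at h
  rwa [Iio_def, setIntegral_congr_set ((ae_eq_refl _).inter Iio_ae_eq_Iic),
    Iic_inter_Iic, ← stdNormalCdf_eq_integral] at h

lemma tendsto_bivariateStdNormalCdf_neg_one (x y : ℝ) :
    Tendsto (fun r ↦ bivariateStdNormalCdf r x y) (𝓝[>] (-1))
      (𝓝 (stdNormalCdf x - stdNormalCdf (min x (-y)))) := by
  have h := tendsto_bivariateStdNormalCdf (neg_ne_zero.2 one_ne_zero) nhdsWithin_le_nhds
    (nhdsWithin_Ioo_eq_nhdsGT (by norm_num : (-1 : ℝ) < 1) ▸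
      tendsto_sqrt_one_sub_sq (by norm_num)) x y
  have hset : Iic x ∩ {s | -1 * s < y} = Iic x \ Iic (min x (-y)) := by
    ext s
    simp only [mem_inter_iff, mem_Iic, mem_ofPred_eq, Set.mem_sdiff, le_min_iff]
    grind
  rwa [hset, setIntegral_sdiff measurableSet_Iic (integrable_gaussianPDFReal 0 1).integrableOn
    (Iic_subset_Iic.2 (min_le_left _ _)), ← stdNormalCdf_eq_integral,
    ← stdNormalCdf_eq_integral] at h

lemma stdNormalCdf_min_sub_sub_stdNormalCdf_min_neg (x y : ℝ) :
    stdNormalCdf (min x y) - (stdNormalCdf x - stdNormalCdf (min x (-y))) =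
      1 - stdNormalCdf (max |x| |y|) := by
  rcases le_total y x with hyx | hxy <;> rcases le_total (-y) x with hyx' | hxy'
  · rw [min_eq_right hyx, min_eq_right hyx', stdNormalCdf_neg,
      show max |x| |y| = x by grind [abs_eq_max_neg]]
    ring
  · rw [min_eq_right hyx, min_eq_left hxy', show max |x| |y| = -y by grind [abs_eq_max_neg],
      stdNormalCdf_neg]
    ring
  · rw [min_eq_left hxy, min_eq_right hyx', show max |x| |y| = y by grind [abs_eq_max_neg],
      stdNormalCdf_neg]
    ring
  · rw [min_eq_left hxy, min_eq_left hxy', show max |x| |y| = -x by grind [abs_eq_max_neg],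
      stdNormalCdf_neg]
    ring

theorem integral_bivariateStdNormalPDF_corr (x y : ℝ) :
    ∫ ρ in Ioo (-1) 1, bivariateStdNormalPDF ρ x y = 1 - stdNormalCdf (max |x| |y|) := by
  rw [← integral_Ioc_eq_integral_Ioo, ← intervalIntegral.integral_of_le (by norm_num),
    intervalIntegral.integral_eq_sub_of_hasDerivAt_of_tendsto (by norm_num)
      (fun ρ hρ ↦ hasDerivAt_bivariateStdNormalCdf (abs_lt.2 hρ) x y)
      ((intervalIntegrable_iff_integrableOn_Ioc_of_le (by norm_num)).2
        (integrableOn_bivariateStdNormalPDF_corr x y))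
      (tendsto_bivariateStdNormalCdf_neg_one x y) (tendsto_bivariateStdNormalCdf_one x y),
    stdNormalCdf_min_sub_sub_stdNormalCdf_min_neg]

theorem uniform_correlation_mixture (x₁ x₂ : ℝ) :
    ∫ ρ in Ioo (-1 : ℝ) 1,
        (1 / (4 * π * Real.sqrt (1 - ρ ^ 2))) *
          Real.exp (-(x₁ ^ 2 + x₂ ^ 2 - 2 * ρ * x₁ * x₂) / (2 * (1 - ρ ^ 2)))
      = (1 / 2) * (1 - stdNormalCdf (max |x₁| |x₂|)) := by
  have hhalf (ρ : ℝ) : (1 / (4 * π * Real.sqrt (1 - ρ ^ 2))) *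
      Real.exp (-(x₁ ^ 2 + x₂ ^ 2 - 2 * ρ * x₁ * x₂) / (2 * (1 - ρ ^ 2))) =
      1 / 2 * bivariateStdNormalPDF ρ x₁ x₂ := by
    unfold bivariateStdNormalPDF
    ring
  simp only [hhalf, integral_const_mul, integral_bivariateStdNormalPDF_corr]
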